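/- arXiv:0911.3674 — 2 statements merged into one kernel-verified Lean document; each statement's English description precedes it below -/
import Mathlib

section
/- Let R = ⟨A,V,C,W,h⟩ be a restricted regular constraint. Let s and t be terms such that s is structurally subsumed by t with respect to R, and Vars(s) ∩ W = ∅. Let φ(s) be an instance of ⟨{s},R⟩. Then φ(s) is an instance of ⟨{t},R⟩ if and only if: (i) for all variable positions p, q of t with t[p] = t[q] it holds φ(s)/p = φ(s)/q, and (ii) for all variable positions p of t with t[p] ∈ W it holds height(φ(s)/p) ≤ h. -/
namespace RITRC

/-- Terms over a signature (symbols `F` with arities `ar`) with variables in `V`. -/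
inductive Term (F : Type) (ar : F → ℕ) (V : Type) : Type where
  | var : V → Term F ar V
  | app : (f : F) → (Fin (ar f) → Term F ar V) → Term F ar V

/-- Ground terms (terms without variables). -/
abbrev GTerm (F : Type) (ar : F → ℕ) : Type := Term F ar Empty

variable {F V V' Q : Type} {ar : F → ℕ}

/-- Applying a substitution to a term. -/
def Term.subst (φ : V → Term F ar V') : Term F ar V → Term F ar V'
  | .var x => φ x
  | .app f ts => .app f (fun i => (ts i).subst φ)

/-- The height of a term. -/
def Term.height : Term F ar V → ℕ
  | .var _ => 0
  | .app _ ts => Finset.univ.sup (fun i => (ts i).height + 1)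

/-- The size of a term. -/
def Term.size : Term F ar V → ℕ
  | .var _ => 1
  | .app _ ts => 1 + ∑ i, (ts i).size

/-- The subterm of a term at a position (a list of child indices), if it exists. -/
def Term.sub : Term F ar V → List ℕ → Option (Term F ar V)
  | t, [] => some t
  | .var _, _ :: _ => none
  | .app f ts, i :: p => if h : i < ar f then (ts ⟨i, h⟩).sub p else none

/-- The root symbol of a term: a function symbol or a variable. -/
def Term.rootSym : Term F ar V → F ⊕ V
  | .var x => .inr x
  | .app f _ => .inl f

/-- `p` is a position of `t`. -/
def Term.isPos (t : Term F ar V) (p : List ℕ) : Prop := t.sub p ≠ none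

/-- `p` is a variable position of `t`. -/
def Term.isVarPos (t : Term F ar V) (p : List ℕ) : Prop :=
  ∃ x, t.sub p = some (Term.var x)

/-- `p` is a non-variable position of `t`. -/
def Term.isNonVarPos (t : Term F ar V) (p : List ℕ) : Prop :=
  ∃ f ts, t.sub p = some (Term.app f ts)

/-- The variable `x` occurs in `t`. -/
def Term.varOccurs (t : Term F ar V) (x : V) : Prop :=
  ∃ p, t.sub p = some (Term.var x)

/-- The variable `x` occurs at least twice in `t`. -/
def Term.occursTwice (t : Term F ar V) (x : V) : Prop :=
  ∃ p q, p ≠ q ∧ t.sub p = some (Term.var x) ∧ t.sub q = some (Term.var x)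

/-- `t` is determined at position `p`: either `p` is a non-variable position
of `t`, or some prefix of `p` is labeled by a constant symbol. -/
def Term.determinedAt (t : Term F ar V) (p : List ℕ) : Prop :=
  t.isNonVarPos p ∨ ∃ p', p' <+: p ∧ ∃ f ts, t.sub p' = some (Term.app f ts) ∧ ar f = 0

/-- A deterministic tree automaton: at most one transition `f(q₁,…,qₖ) → q`
for every `f` and states `q₁,…,qₖ`. -/
structure DTA (F : Type) (ar : F → ℕ) (Q : Type) : Type where
  δ : (f : F) → (Fin (ar f) → Q) → Option Q

/-- Collect a family of optional values into an optional family. -/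
def allSome {n : ℕ} {α : Type} (g : Fin n → Option α) : Option (Fin n → α) :=
  if h : ∀ i, (g i).isSome then some (fun i => (g i).get (h i)) else none

/-- The state reached by `A` on a term, where variables are pre-assigned states by `C`. -/
def DTA.runC (A : DTA F ar Q) (C : V → Q) : Term F ar V → Option Q
  | .var x => some (C x)
  | .app f ts => (allSome (fun i => A.runC C (ts i))).bind (A.δ f)

/-- The state reached by `A` on a ground term. -/
def DTA.run (A : DTA F ar Q) : GTerm F ar → Option Q :=
  A.runC (fun x => x.elim)

/-- `L(A,q)`: the set of ground terms on which `A` reaches state `q`. -/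
def DTA.lang (A : DTA F ar Q) (q : Q) : Set (GTerm F ar) :=
  {t | A.run t = some q}

/-- `A` is complete. -/
def DTA.Complete (A : DTA F ar Q) : Prop :=
  ∀ (f : F) (qs : Fin (ar f) → Q), (A.δ f qs).isSome

/-- `A` is a 1-or-n DTA: each state has exactly one, or at least `n`, terms. -/
def DTA.OneOr (A : DTA F ar Q) (n : ℕ) : Prop :=
  ∀ q : Q, (A.lang q).encard = 1 ∨ (n : ℕ∞) ≤ (A.lang q).encard

/-- The number of transitions of a DTA. -/
noncomputable def DTA.numTrans [Fintype F] [Fintype Q] (A : DTA F ar Q) : ℕ :=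
  ∑ f : F, ∑ qs : Fin (ar f) → Q, if (A.δ f qs).isSome then 1 else 0

/-- A set of ground terms is regular if it is recognized by some (finite) DTA. -/
def IsRegular (L : Set (GTerm F ar)) : Prop :=
  ∃ (Q : Type) (_ : Fintype Q) (A : DTA F ar Q) (Facc : Set Q),
    L = {t | ∃ q ∈ Facc, A.run t = some q}

/-- A DTA bundled with its (finite) state type and accepting states. -/
structure NDTA (F : Type) (ar : F → ℕ) : Type 1 where
  Q : Type
  fin : Fintype Q
  A : DTA F ar Q
  acc : Set Q

/-- The language recognized by a bundled DTA. -/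
def NDTA.lang (N : NDTA F ar) : Set (GTerm F ar) :=
  {t | ∃ q ∈ N.acc, N.A.run t = some q}

/-- The size of a bundled DTA: number of states plus sum of sizes of transitions. -/
noncomputable def NDTA.size [Fintype F] (N : NDTA F ar) : ℕ :=
  letI := N.fin
  Fintype.card N.Q +
    ∑ f : F, ∑ qs : Fin (ar f) → N.Q, if (N.A.δ f qs).isSome then ar f + 2 else 0

/-- `L(⟨S,M⟩)`: the language of a set of terms `S` with regular constraints `M`. -/
def langM (S : Set (Term F ar V)) (M : V → NDTA F ar) : Set (GTerm F ar) :=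
  {t | ∃ s ∈ S, ∃ φ : V → GTerm F ar, (∀ x, φ x ∈ (M x).lang) ∧ t = s.subst φ}

/-- `L(⟨S,R⟩)` for a single regular constraint `R = ⟨A,C⟩`. -/
def langSingle (S : Set (Term F ar V)) (A : DTA F ar Q) (C : V → Q) :
    Set (GTerm F ar) :=
  {t | ∃ s ∈ S, ∃ φ : V → GTerm F ar, (∀ x, A.run (φ x) = some (C x)) ∧ t = s.subst φ}

/-- A restricted regular constraint `R = ⟨A,V,C,W,h⟩`. -/
structure RRC (F : Type) (ar : F → ℕ) (V Q : Type) : Type where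
  A : DTA F ar Q
  C : V → Q
  W : Set V
  hgt : ℕ

/-- A solution of a restricted regular constraint. -/
def RRC.IsSolution (R : RRC F ar V Q) (φ : V → GTerm F ar) : Prop :=
  (∀ x, R.A.run (φ x) = some (R.C x)) ∧ ∀ x ∈ R.W, (φ x).height ≤ R.hgt

/-- `L(⟨S,R⟩)` for a restricted regular constraint `R`. -/
def RRC.lang (R : RRC F ar V Q) (S : Set (Term F ar V)) : Set (GTerm F ar) :=
  {t | ∃ s ∈ S, ∃ φ, R.IsSolution φ ∧ t = s.subst φ}

/-- Renaming the variables of a term. -/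
def Term.rename (ρ : V → V') (t : Term F ar V) : Term F ar V' :=
  t.subst (fun x => Term.var (ρ x))

/-- `s` and `t` are structurally similar: `t` is obtained from `s` by an
injective variable renaming. -/
def StructSim (s : Term F ar V) (t : Term F ar V') : Prop :=
  ∃ ρ : V → V', Function.Injective ρ ∧ t = s.rename ρ

/-- `s` and `t` are structurally equal with respect to the state assignment `C`. -/
def StructEq (C : V → Q) (s t : Term F ar V) : Prop :=
  StructSim s t ∧
    ∀ p x y, s.sub p = some (Term.var x) → t.sub p = some (Term.var y) → C x = C y

/-- `s` is structurally subsumed by `t` (with respect to `A` and `C`). -/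
def StructSub (A : DTA F ar Q) (C : V → Q) (s t : Term F ar V) : Prop :=
  (∀ p f ts, t.sub p = some (Term.app f ts) →
    ∃ sp, s.sub p = some sp ∧ sp.rootSym = Sum.inl f) ∧
  (∀ p tp, t.sub p = some tp → ∃ sp, s.sub p = some sp ∧ A.runC C tp = A.runC C sp)

/-- Building a binary term `f(t,u)` from a symbol of arity 2. -/
def mkBin {f : F} (h : ar f = 2) (t u : Term F ar V) : Term F ar V :=
  Term.app f (fun i => if (i : ℕ) = 0 then t else u)

/-- `s` satisfies the infinite-instances property in `⟨S,R⟩`. -/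
def InfiniteInstances (R : RRC F ar V Q) (S : Set (Term F ar V)) (s : Term F ar V) :
    Prop :=
  ∃ x, s.occursTwice x ∧
    ∃ φ : ℕ → (V → GTerm F ar),
      (∀ i, R.IsSolution (φ i)) ∧
      (∀ i, s.subst (φ i) ∉ R.lang (S \ {s})) ∧
      (∀ i j, i ≠ j → φ i x ≠ φ j x)

/-- The set of prefixes of a finite set of positions. -/
def prefixes (P : Finset (List ℕ)) : Finset (List ℕ) :=
  P.biUnion (fun p => p.inits.toFinset)



theorem Term.sub_nil (t : Term F ar V) : t.sub [] = some t := by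
  cases t <;> rfl

theorem Term.sub_append (t : Term F ar V) (p q : List ℕ) :
    t.sub (p ++ q) = (t.sub p).bind (fun u => u.sub q) := by
  induction p generalizing t with
  | nil => simp [Term.sub]
  | cons i p ih =>
    cases t with
    | var x => simp [Term.sub]
    | app f ts =>
      simp only [List.cons_append, Term.sub]
      split
      · exact ih _
      · simp

theorem Term.sub_subst {φ : V → Term F ar V'} {t tp : Term F ar V} {p : List ℕ}
    (h : t.sub p = some tp) : (t.subst φ).sub p = some (tp.subst φ) := by
  induction p generalizing t with
  | nil =>
    rw [Term.sub_nil, Option.some.injEq] at h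
    subst h
    exact Term.sub_nil _
  | cons i p ih =>
    cases t with
    | var x => simp [Term.sub] at h
    | app f ts =>
      simp only [Term.sub, Term.subst] at h ⊢
      split at h
      · next hi => rw [dif_pos hi]; exact ih h
      · exact absurd h (by simp)

theorem run_subst (A : DTA F ar Q) (C : V → Q) (φ : V → GTerm F ar)
    (hφ : ∀ x, A.run (φ x) = some (C x)) :
    ∀ u : Term F ar V, A.run (u.subst φ) = A.runC C u := by
  intro u
  induction u with
  | var x => exact hφ x
  | app f ts ih =>
    simp only [Term.subst, DTA.run, DTA.runC] at *
    have : (fun i => A.runC (fun x => x.elim) (Term.subst φ (ts i))) =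
        fun i => A.runC C (ts i) := funext ih
    rw [this]

/-- let `s` be structurally subsumed by `t` w.r.t. `R` with
`Vars(s) ∩ W = ∅`, and let `φ(s)` be an instance of `⟨{s},R⟩`. Then `φ(s)` is an
instance of `⟨{t},R⟩` iff (i) for all variable positions `p,q` of `t` with
`t[p] = t[q]` we have `φ(s)/p = φ(s)/q`, and (ii) for all variable positions `p`
of `t` with `t[p] ∈ W` we have `height(φ(s)/p) ≤ h`. -/
theorem instance_of_subsumer_iff {F V Q : Type} {ar : F → ℕ}
    [Fintype F] [Fintype Q] [Fintype V]
    (R : RRC F ar V Q) (s t : Term F ar V)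
    (hsub : StructSub R.A R.C s t)
    (hW : ∀ x : V, s.varOccurs x → x ∉ R.W)
    (φ : V → GTerm F ar) (hφ : R.IsSolution φ) :
    s.subst φ ∈ R.lang {t} ↔
      ((∀ (p q : List ℕ) (x : V), t.sub p = some (Term.var x) →
          t.sub q = some (Term.var x) → (s.subst φ).sub p = (s.subst φ).sub q) ∧
       (∀ (p : List ℕ) (x : V), t.sub p = some (Term.var x) → x ∈ R.W →
          ∀ u : GTerm F ar, (s.subst φ).sub p = some u → u.height ≤ R.hgt)) := by
  constructor
  · rintro ⟨t', ht', ψ, hψ, heq⟩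
    rw [Set.mem_singleton_iff] at ht'
    subst ht'
    constructor
    · intro p q x hp hq
      rw [heq, Term.sub_subst hp, Term.sub_subst hq]
    · intro p x hp hxW u hu
      rw [heq, Term.sub_subst hp] at hu
      simp only [Term.subst, Option.some.injEq] at hu
      rw [← hu]
      exact hψ.2 x hxW
  · rintro ⟨hi, hii⟩
    classical
    set ψ : V → GTerm F ar := fun x =>
      if h : ∃ p, t.sub p = some (Term.var x) then
        ((s.subst φ).sub h.choose).getD (φ x) else φ x with hψdef
    have key : ∀ x p sp, t.sub p = some (Term.var x) → s.sub p = some sp →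
        ψ x = sp.subst φ := by
      intro x p sp hp hsp
      have hex : ∃ p, t.sub p = some (Term.var x) := ⟨p, hp⟩
      obtain ⟨sp₀, hsp₀, -⟩ := hsub.2 hex.choose _ hex.choose_spec
      have h1 : (s.subst φ).sub hex.choose = some (sp₀.subst φ) := Term.sub_subst hsp₀
      have h2 : (s.subst φ).sub p = some (sp.subst φ) := Term.sub_subst hsp
      have h3 := hi hex.choose p x hex.choose_spec hp
      have h4 : (s.subst φ).sub hex.choose = some (sp.subst φ) := by rw [h3]; exact h2
      simp only [hψdef]
      rw [dif_pos hex, h4]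
      rfl
    have hψrun : ∀ x, R.A.run (ψ x) = some (R.C x) := by
      intro x
      by_cases hex : ∃ p, t.sub p = some (Term.var x)
      · obtain ⟨p, hp⟩ := hex
        obtain ⟨sp, hsp, hrc⟩ := hsub.2 p _ hp
        rw [key x p sp hp hsp, run_subst R.A R.C φ hφ.1 sp, ← hrc]
        rfl
      · simp only [hψdef, dif_neg hex]
        exact hφ.1 x
    have hψh : ∀ x ∈ R.W, (ψ x).height ≤ R.hgt := by
      intro x hxW
      by_cases hex : ∃ p, t.sub p = some (Term.var x)
      · obtain ⟨p, hp⟩ := hex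
        obtain ⟨sp, hsp, -⟩ := hsub.2 p _ hp
        rw [key x p sp hp hsp]
        exact hii p x hp hxW _ (Term.sub_subst hsp)
      · simp only [hψdef, dif_neg hex]
        exact hφ.2 x hxW
    have main : ∀ tp : Term F ar V, ∀ p sp, t.sub p = some tp → s.sub p = some sp →
        tp.subst ψ = sp.subst φ := by
      intro tp
      induction tp with
      | var x => intro p sp hp hsp; exact key x p sp hp hsp
      | app f ts ih =>
        intro p sp hp hsp
        obtain ⟨sp', hsp', hroot⟩ := hsub.1 p f ts hp
        rw [hsp] at hsp'
        injection hsp' with h'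
        subst h'
        cases sp with
        | var y => simp [Term.rootSym] at hroot
        | app g ss =>
          simp only [Term.rootSym, Sum.inl.injEq] at hroot
          subst hroot
          simp only [Term.subst]
          congr 1
          funext i
          apply ih i (p ++ [(i : ℕ)]) (ss i)
          · rw [Term.sub_append, hp]
            simp [Term.sub, i.isLt]
          · rw [Term.sub_append, hsp]
            simp [Term.sub, i.isLt]
    exact ⟨t, rfl, ψ, ⟨hψrun, hψh⟩, (main t [] s (Term.sub_nil t) (Term.sub_nil s)).symm⟩


end RITRC
end

section
/- Let R = ⟨A,V,C,W,h⟩ be a restricted regular constraint with A = ⟨Q,Σ,δ⟩ a 1-or-(|S|+1) DTA. Let S be a finite set of terms and let s ∈ T_Σ(V−W) be structurally subsumed by all terms in S with respect to R, with h ≥ |Q| + height(s). Then L(⟨{s},R⟩) − L(⟨S,R⟩) = { φ(s) | φ ∈ Sol(⟨F(s,S,W,h), A, C⟩) }, where F(s,S,W,h) is the disjunction, over all S' ⊆ S, all P,U ∈ selPos(S') with P(s') ≠ U(s') and s'[P(s')] = s'[U(s')] for every s' ∈ S', and all T ∈ selPos(S−S',W), of the conjunction (⋀_{t∈S'} s/P(t)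 ≠ s/U(t)) ∧ (⋀_{t∈S−S'} height(s/T(t)) > h). -/
namespace RITRC

variable {F V V' Q : Type} {ar : F → ℕ}

/-- `φ` satisfies the formula `F(s,S,W,h)` of Definition `definition-formula`:
the disjunction over `S' ⊆ S`, selections `P,U ∈ selPos(S')` with
`P(s') ≠ U(s')` and `s'[P(s')] = s'[U(s')]`, and `T ∈ selPos(S∖S',W)`, of the
conjunctions `⋀_{t∈S'} s/P(t) ≠ s/U(t)  ∧  ⋀_{t∈S∖S'} height(s/T(t)) > h`. -/
def SatF {F V Q : Type} {ar : F → ℕ} (R : RRC F ar V Q) (s : Term F ar V)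
    (S : Finset (Term F ar V)) (φ : V → GTerm F ar) : Prop :=
  ∃ S' ⊆ S, ∃ P U T : Term F ar V → List ℕ,
    -- P, U select two distinct positions of the same variable in each t ∈ S'
    (∀ t ∈ S', P t ≠ U t ∧ ∃ x : V,
      t.sub (P t) = some (Term.var x) ∧ t.sub (U t) = some (Term.var x)) ∧
    -- T selects a position of a variable of W in each t ∈ S ∖ S'
    (∀ t ∈ S, t ∉ S' → ∃ x : V, t.sub (T t) = some (Term.var x) ∧ x ∈ R.W) ∧
    -- the inequality predicates φ(s/P(t)) ≠ φ(s/U(t)) hold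
    (∀ t ∈ S', ∃ sp su : Term F ar V, s.sub (P t) = some sp ∧
      s.sub (U t) = some su ∧ sp.subst φ ≠ su.subst φ) ∧
    -- the height predicates height(φ(s/T(t))) > h hold
    (∀ t ∈ S, t ∉ S' → ∃ sp : Term F ar V, s.sub (T t) = some sp ∧
      R.hgt < (sp.subst φ).height)

/-! Since `s` is structurally subsumed by `t ∈ S`, an instance `φ(s)` can fail to be an
instance `ψ(t)` for only two reasons: two occurrences of one variable of `t` sit above
different subterms of `φ(s)`, or a variable of `W` occurring in `t` sits above a subterm of
`φ(s)` higher than `h`. Otherwise `ψ` is read off `φ(s)` at the variable positions of `t`.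
Conversely, either obstruction rules out every instance of `t`. Finally `φ(s)` itself lies in
`L(⟨{s},R⟩)`: the variables of `s` are outside `W`, and every other variable can be sent to a
term of height `< |Q| ≤ h`, since a state reachable at all is reachable below height `|Q|`. -/

section Development

variable {F V V' Q : Type} {ar : F → ℕ}

namespace Term

theorem sub_nil_s12 (t : Term F ar V) : t.sub [] = some t := by cases t <;> rfl

theorem sub_app_cons (f : F) (ts : Fin (ar f) → Term F ar V) (i : Fin (ar f))
    (p : List ℕ) : (Term.app f ts).sub ((i : ℕ) :: p) = (ts i).sub p := by
  simp [Term.sub]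

theorem sub_subst_s12 {s sp : Term F ar V} {p : List ℕ} (h : s.sub p = some sp)
    (φ : V → Term F ar V') : (s.subst φ).sub p = some (sp.subst φ) := by
  induction p generalizing s with
  | nil => rw [sub_nil_s12, Option.some_inj] at h; rw [← h]; exact sub_nil_s12 _
  | cons i p ih =>
    cases s with
    | var x => simp [Term.sub] at h
    | app f ts =>
      simp only [Term.sub] at h
      split at h
      · next hi => simpa only [Term.subst, Term.sub, dif_pos hi] using ih h
      · simp at h

theorem subst_congr {s : Term F ar V} {φ φ' : V → Term F ar V'}
    (h : ∀ x, s.varOccurs x → φ x = φ' x) : s.subst φ = s.subst φ' := by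
  induction s with
  | var x => exact h x ⟨[], rfl⟩
  | app f ts ih =>
    simp only [Term.subst]
    congr 1
    funext i
    refine ih i fun x ⟨p, hp⟩ => h x ⟨(i : ℕ) :: p, ?_⟩
    rwa [sub_app_cons]

theorem subst_eq_subst_of_sub {s t : Term F ar V} {φ ψ : V → Term F ar V'}
    (hfun : ∀ p f ts, t.sub p = some (Term.app f ts) →
      ∃ sp, s.sub p = some sp ∧ sp.rootSym = Sum.inl f)
    (hvar : ∀ p y, t.sub p = some (Term.var y) →
      ∃ sp, s.sub p = some sp ∧ ψ y = sp.subst φ) :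
    t.subst ψ = s.subst φ := by
  induction t generalizing s with
  | var y =>
    obtain ⟨sp, hsp, hy⟩ := hvar [] y (sub_nil_s12 _)
    rw [sub_nil_s12, Option.some_inj] at hsp
    rwa [← hsp] at hy
  | app f ts ih =>
    obtain ⟨sp, hsp, hroot⟩ := hfun [] f ts (sub_nil_s12 _)
    rw [sub_nil_s12, Option.some_inj] at hsp
    subst hsp
    cases s with
    | var x => simp [Term.rootSym] at hroot
    | app g ss =>
      obtain rfl : g = f := by simpa [Term.rootSym] using hroot
      simp only [Term.subst]
      congr 1
      funext i
      refine ih i (fun p f' ts' hp => ?_) (fun p y hp => ?_)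
      · simpa only [sub_app_cons] using hfun ((i : ℕ) :: p) f' ts' (by rwa [sub_app_cons])
      · simpa only [sub_app_cons] using hvar ((i : ℕ) :: p) y (by rwa [sub_app_cons])

end Term

theorem allSome_eq_some_iff {n : ℕ} {α : Type} {g : Fin n → Option α} {v : Fin n → α} :
    allSome g = some v ↔ ∀ i, g i = some (v i) := by
  unfold allSome
  split
  · next hall =>
    simp only [Option.some_inj, funext_iff]
    exact forall_congr' fun i => by
      rw [Option.eq_some_iff_get_eq]
      exact ⟨fun h => ⟨hall i, h⟩, fun ⟨_, h⟩ => h⟩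
  · next hall =>
    simp only [reduceCtorEq, false_iff, not_forall]
    obtain ⟨i, hi⟩ := not_forall.mp hall
    exact ⟨i, by simp_all⟩

namespace DTA

theorem run_app (A : DTA F ar Q) (f : F) (ts : Fin (ar f) → GTerm F ar) :
    A.run (Term.app f ts) = (allSome fun i => A.run (ts i)).bind (A.δ f) := rfl

theorem run_subst (A : DTA F ar Q) {C : V → Q} {φ : V → GTerm F ar}
    (hφ : ∀ x, A.run (φ x) = some (C x)) (t : Term F ar V) :
    A.run (t.subst φ) = A.runC C t := by
  induction t with
  | var x => exact hφ x
  | app f ts ih =>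
    show (allSome fun i => A.run ((ts i).subst φ)).bind (A.δ f) = _
    simp only [ih]
    rfl

def reachBelow (A : DTA F ar Q) : ℕ → Set Q
  | 0 => ∅
  | n + 1 => {q | ∃ (f : F) (qs : Fin (ar f) → Q),
      (∀ i, qs i ∈ A.reachBelow n) ∧ A.δ f qs = some q}

theorem mem_reachBelow_iff (A : DTA F ar Q) (n : ℕ) (q : Q) :
    q ∈ A.reachBelow n ↔ ∃ t : GTerm F ar, A.run t = some q ∧ t.height < n := by
  induction n generalizing q with
  | zero => simp [reachBelow]
  | succ n ih =>
    constructor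
    · rintro ⟨f, qs, hqs, hδ⟩
      choose ts hrun hht using fun i => (ih (qs i)).mp (hqs i)
      refine ⟨Term.app f ts, by rwa [run_app, allSome_eq_some_iff.mpr hrun], ?_⟩
      simp only [Term.height]
      exact (Finset.sup_lt_iff (Nat.succ_pos n)).mpr fun i _ => Nat.succ_lt_succ (hht i)
    · rintro ⟨_ | ⟨f, ts⟩, hrun, hht⟩
      · contradiction
      obtain ⟨qs, hall, hδ⟩ := Option.bind_eq_some_iff.mp hrun
      refine ⟨f, qs, fun i => (ih (qs i)).mpr ⟨ts i, allSome_eq_some_iff.mp hall i, ?_⟩, hδ⟩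
      have : (ts i).height + 1 ≤ (Term.app f ts).height :=
        Finset.le_sup (f := fun i => (ts i).height + 1) (Finset.mem_univ i)
      omega

theorem reachBelow_mono (A : DTA F ar Q) : Monotone A.reachBelow := fun _ _ hnm q hq => by
  obtain ⟨t, ht, hh⟩ := (A.mem_reachBelow_iff _ q).mp hq
  exact (A.mem_reachBelow_iff _ q).mpr ⟨t, ht, hh.trans_le hnm⟩

theorem reachBelow_eq_of_le {A : DTA F ar Q} {n : ℕ}
    (h : A.reachBelow n = A.reachBelow (n + 1)) {m : ℕ} (hm : n ≤ m) :
    A.reachBelow m = A.reachBelow n := by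
  induction m, hm using Nat.le_induction with
  | base => rfl
  | succ m _ ih =>
    calc A.reachBelow (m + 1) = A.reachBelow (n + 1) := by simp only [reachBelow, ih]
      _ = A.reachBelow n := h.symm

theorem exists_reachBelow_eq_succ (A : DTA F ar Q) [Fintype Q] :
    ∃ n ≤ Fintype.card Q, A.reachBelow n = A.reachBelow (n + 1) := by
  by_contra! hne
  have hgrow : ∀ n ≤ Fintype.card Q + 1, n ≤ (A.reachBelow n).ncard := by
    intro n
    induction n with
    | zero => simp
    | succ n ih =>
      intro hn
      have hlt := Set.ncard_lt_ncard
        ((A.reachBelow_mono (Nat.le_add_right n 1)).ssubset_of_ne (hne n (by omega))) (Set.toFinite _)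
      have := ih (by omega)
      omega
  have := hgrow _ le_rfl
  have := Set.ncard_le_card (A.reachBelow (Fintype.card Q + 1))
  rw [Nat.card_eq_fintype_card] at this
  omega

theorem exists_run_eq_height_lt_card (A : DTA F ar Q) [Fintype Q] {t : GTerm F ar} {q : Q}
    (ht : A.run t = some q) : ∃ t' : GTerm F ar, A.run t' = some q ∧ t'.height < Fintype.card Q := by
  obtain ⟨n, hn, hstab⟩ := A.exists_reachBelow_eq_succ
  have hq : q ∈ A.reachBelow (max n (t.height + 1)) :=
    A.reachBelow_mono (le_max_right _ _) ((A.mem_reachBelow_iff _ q).mpr ⟨t, ht, by omega⟩)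
  rw [reachBelow_eq_of_le hstab (le_max_left _ _)] at hq
  exact (A.mem_reachBelow_iff _ q).mp (A.reachBelow_mono hn hq)

end DTA

def RepeatedVarClash (s t : Term F ar V) (φ : V → GTerm F ar) (p q : List ℕ) : Prop :=
  (p ≠ q ∧ ∃ x, t.sub p = some (Term.var x) ∧ t.sub q = some (Term.var x)) ∧
    ∃ sp su : Term F ar V, s.sub p = some sp ∧ s.sub q = some su ∧ sp.subst φ ≠ su.subst φ

def RestrictedVarExcess (R : RRC F ar V Q) (s t : Term F ar V) (φ : V → GTerm F ar)
    (p : List ℕ) : Prop :=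
  (∃ x, t.sub p = some (Term.var x) ∧ x ∈ R.W) ∧
    ∃ sp : Term F ar V, s.sub p = some sp ∧ R.hgt < (sp.subst φ).height

variable {s t : Term F ar V} {φ ψ : V → GTerm F ar}

theorem eq_of_subst_eq_of_sub {p : List ℕ} {x : V} {sp : Term F ar V}
    (heq : t.subst ψ = s.subst φ) (ht : t.sub p = some (Term.var x)) (hs : s.sub p = some sp) :
    ψ x = sp.subst φ := by
  have := Term.sub_subst_s12 ht ψ
  rwa [heq, Term.sub_subst_s12 hs φ, Option.some_inj, eq_comm] at this

theorem subst_ne_of_repeatedVarClash {p q : List ℕ} (h : RepeatedVarClash s t φ p q)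
    (ψ : V → GTerm F ar) : t.subst ψ ≠ s.subst φ := fun heq => by
  obtain ⟨⟨-, x, htp, htq⟩, sp, su, hsp, hsu, hne⟩ := h
  exact hne ((eq_of_subst_eq_of_sub heq htp hsp).symm.trans (eq_of_subst_eq_of_sub heq htq hsu))

theorem subst_ne_of_restrictedVarExcess {R : RRC F ar V Q} {p : List ℕ}
    (h : RestrictedVarExcess R s t φ p) (hψ : R.IsSolution ψ) : t.subst ψ ≠ s.subst φ :=
  fun heq => by
  obtain ⟨⟨x, htp, hx⟩, sp, hsp, hlt⟩ := h
  have := hψ.2 x hx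
  rw [eq_of_subst_eq_of_sub heq htp hsp] at this
  omega

theorem subst_not_mem_lang_of_satF {R : RRC F ar V Q} {S : Finset (Term F ar V)}
    (h : SatF R s S φ) : s.subst φ ∉ R.lang ↑S := by
  rintro ⟨t, ht, ψ, hψ, heq⟩
  obtain ⟨S', -, P, U, T, hPU, hT, hPUs, hTs⟩ := h
  by_cases htS' : t ∈ S'
  · exact subst_ne_of_repeatedVarClash ⟨hPU t htS', hPUs t htS'⟩ ψ heq.symm
  · exact subst_ne_of_restrictedVarExcess ⟨hT t ht htS', hTs t ht htS'⟩ hψ heq.symm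

theorem subst_mem_lang_singleton_self [Fintype Q] {R : RRC F ar V Q}
    (hW : ∀ x, s.varOccurs x → x ∉ R.W) (hh : Fintype.card Q ≤ R.hgt)
    (hφ : ∀ x, R.A.run (φ x) = some (R.C x)) : s.subst φ ∈ R.lang {s} := by
  classical
  choose short hrun hheight using fun x => R.A.exists_run_eq_height_lt_card (hφ x)
  refine ⟨s, rfl, fun x => if s.varOccurs x then φ x else short x, ⟨fun x => ?_, fun x hx => ?_⟩,
    Term.subst_congr fun x hx => (if_pos hx).symm⟩
  · dsimp only
    split
    · exact hφ x
    · exact hrun x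
  · dsimp only
    rw [if_neg fun hocc => hW x hocc hx]
    exact (hheight x).le.trans hh

/-- Without a clash, `ψ y := φ(s/p)` for any position `p` of `y` in `t` is well defined. -/
theorem exists_subst_eq_on_varPos
    (hpos : ∀ p y, t.sub p = some (Term.var y) → ∃ sp, s.sub p = some sp)
    (hclash : ∀ p q, ¬ RepeatedVarClash s t φ p q) :
    ∃ ψ : V → GTerm F ar, (∀ y, ¬ t.varOccurs y → ψ y = φ y) ∧
      ∀ p y sp, t.sub p = some (Term.var y) → s.sub p = some sp → ψ y = sp.subst φ := by
  classical
  choose pos hpos' using fun (y : V) (h : t.varOccurs y) => h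
  choose sub hsub using fun (y : V) (h : t.varOccurs y) => hpos _ y (hpos' y h)
  refine ⟨fun y => if h : t.varOccurs y then (sub y h).subst φ else φ y,
    fun y hy => dif_neg hy, fun p y sp htp hsp => ?_⟩
  have hy : t.varOccurs y := ⟨p, htp⟩
  dsimp only
  rw [dif_pos hy]
  by_contra hne
  by_cases hp : pos y hy = p
  · have hsy := hsub y hy
    rw [hp, hsp, Option.some_inj] at hsy
    exact hne (by rw [hsy])
  · exact hclash (pos y hy) p ⟨⟨hp, y, hpos' y hy, htp⟩, _, sp, hsub y hy, hsp, hne⟩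

theorem subst_mem_lang_singleton_of_structSub {R : RRC F ar V Q}
    (hst : StructSub R.A R.C s t) (hφ : R.IsSolution φ)
    (hclash : ∀ p q, ¬ RepeatedVarClash s t φ p q)
    (hexcess : ∀ p, ¬ RestrictedVarExcess R s t φ p) : s.subst φ ∈ R.lang {t} := by
  obtain ⟨ψ, hψ_off, hψ_on⟩ :=
    exists_subst_eq_on_varPos (fun p y hp => (hst.2 p _ hp).imp fun _ h => h.1) hclash
  have hψ_at : ∀ p y, t.sub p = some (Term.var y) → ∃ sp, s.sub p = some sp ∧
      ψ y = sp.subst φ ∧ R.A.runC R.C sp = some (R.C y) := fun p y hp => by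
    obtain ⟨sp, hsp, hrun⟩ := hst.2 p _ hp
    exact ⟨sp, hsp, hψ_on p y sp hp hsp, hrun.symm⟩
  refine ⟨t, rfl, ψ, ⟨fun y => ?_, fun y hy => ?_⟩,
    (Term.subst_eq_subst_of_sub hst.1 fun p y hp => ?_).symm⟩
  · by_cases hocc : t.varOccurs y
    · obtain ⟨p, hp⟩ := hocc
      obtain ⟨sp, -, hψy, hrun⟩ := hψ_at p y hp
      rw [hψy, R.A.run_subst hφ.1, hrun]
    · rw [hψ_off y hocc]
      exact hφ.1 y
  · by_cases hocc : t.varOccurs y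
    · obtain ⟨p, hp⟩ := hocc
      obtain ⟨sp, hsp, hψy, -⟩ := hψ_at p y hp
      rw [hψy]
      by_contra hlt
      exact hexcess p ⟨⟨y, hp, hy⟩, sp, hsp, by omega⟩
    · rw [hψ_off y hocc]
      exact hφ.2 y hy
  · obtain ⟨sp, hsp, hψy, -⟩ := hψ_at p y hp
    exact ⟨sp, hsp, hψy⟩

theorem satF_of_subst_not_mem_lang {R : RRC F ar V Q} {S : Finset (Term F ar V)}
    (hsub : ∀ t ∈ S, StructSub R.A R.C s t) (hφ : R.IsSolution φ)
    (hnot : s.subst φ ∉ R.lang ↑S) : SatF R s S φ := by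
  classical
  let S' := S.filter fun t => ∃ p q, RepeatedVarClash s t φ p q
  let PU t := Classical.epsilon fun pq : List ℕ × List ℕ => RepeatedVarClash s t φ pq.1 pq.2
  let T t := Classical.epsilon fun p => RestrictedVarExcess R s t φ p
  have hPU : ∀ t ∈ S', RepeatedVarClash s t φ (PU t).1 (PU t).2 := fun t ht => by
    obtain ⟨p, q, h⟩ := (Finset.mem_filter.mp ht).2
    exact Classical.epsilon_spec (p := fun pq => RepeatedVarClash s t φ pq.1 pq.2) ⟨(p, q), h⟩
  have hT : ∀ t ∈ S, t ∉ S' → RestrictedVarExcess R s t φ (T t) := fun t ht htS' => by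
    refine Classical.epsilon_spec (not_forall_not.mp fun hexcess => hnot ?_)
    obtain ⟨_, rfl, ψ, hψ, heq⟩ := subst_mem_lang_singleton_of_structSub (hsub t ht) hφ
      (fun p q h => htS' (Finset.mem_filter.mpr ⟨ht, p, q, h⟩)) hexcess
    exact ⟨_, ht, ψ, hψ, heq⟩
  exact ⟨S', Finset.filter_subset _ _, fun t => (PU t).1, fun t => (PU t).2, T,
    fun t ht => (hPU t ht).1, fun t ht h => (hT t ht h).1,
    fun t ht => (hPU t ht).2, fun t ht h => (hT t ht h).2⟩

end Development

theorem diff_lang_eq_formula_solutions_general {F V Q : Type} {ar : F → ℕ}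
    [Fintype Q]
    (R : RRC F ar V Q) (S : Finset (Term F ar V)) (s : Term F ar V)
    (hsub : ∀ t ∈ S, StructSub R.A R.C s t)
    (hW : ∀ x : V, s.varOccurs x → x ∉ R.W)
    (hh : Fintype.card Q + s.height ≤ R.hgt) :
    R.lang {s} \ R.lang ↑S =
      {u : GTerm F ar | ∃ φ : V → GTerm F ar,
        (∀ x : V, R.A.run (φ x) = some (R.C x)) ∧ SatF R s S φ ∧ u = s.subst φ} := by
  ext u
  constructor
  · rintro ⟨⟨_, rfl, φ, hφ, rfl⟩, hnot⟩
    exact ⟨φ, hφ.1, satF_of_subst_not_mem_lang hsub hφ hnot, rfl⟩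
  · rintro ⟨φ, hφ, hsat, rfl⟩
    exact ⟨subst_mem_lang_singleton_self hW (by omega) hφ, subst_not_mem_lang_of_satF hsat⟩

/-- under the stated hypotheses, the instances of `⟨{s},R⟩` that
are not instances of `⟨S,R⟩` are exactly the terms `φ(s)` for solutions `φ` of
the constrained formula `⟨F(s,S,W,h),A,C⟩`. -/
theorem diff_lang_eq_formula_solutions {F V Q : Type} {ar : F → ℕ}
    [Fintype F] [Fintype Q] [Fintype V]
    (R : RRC F ar V Q) (S : Finset (Term F ar V)) (s : Term F ar V)
    (h1 : R.A.OneOr (S.card + 1))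
    (hsub : ∀ t ∈ S, StructSub R.A R.C s t)
    (hW : ∀ x : V, s.varOccurs x → x ∉ R.W)
    (hh : Fintype.card Q + s.height ≤ R.hgt) :
    R.lang {s} \ R.lang ↑S =
      {u : GTerm F ar | ∃ φ : V → GTerm F ar,
        (∀ x : V, R.A.run (φ x) = some (R.C x)) ∧ SatF R s S φ ∧ u = s.subst φ} :=
  diff_lang_eq_formula_solutions_general R S s hsub hW hh

end RITRC
end
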